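/- Let G be a left partially ordered group (a ≤ b implies ca ≤ cb for all c) with identity e and positive cone G⁺ = {x ∈ G : x > e}, and let 𝒥 be the set of all downward closed nonempty finite subsets of G⁺, with associated density σ_𝒥. Let A and B be subsets of G⁺ with σ_𝒥(A) = α and σ_𝒥(B) = β. Suppose that for every J ∈ 𝒥 and every x ∈ J \ B, the set B*(x) = {b ∈ B : b < x} is nonempty and finite. Then σ_𝒥(BA) ≥ α + β − αβ. -/

import Mathlib

/-- A subset `S` of the positive cone `G⁺ = {x : 1 < x}` is downward closed if
`x ∈ S` implies `(e, x) ⊆ S`. -/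
def DownwardClosed {G : Type*} [Group G] [PartialOrder G] (S : Set G) : Prop :=
  S ⊆ Set.Ioi 1 ∧ ∀ x ∈ S, Set.Ioo (1 : G) x ⊆ S

/-- The collection of all downward closed nonempty finite subsets of the
positive cone of `G`. -/
def goodJ (G : Type*) [Group G] [PartialOrder G] : Set (Set G) :=
  {J | J.Nonempty ∧ J.Finite ∧ DownwardClosed J}

/-- The density `σ_𝒥(A) = inf { |A ∩ J| / |J| : J ∈ 𝒥 }` determined by a
collection `𝒥` of subsets of `X`. -/
noncomputable def densJ {X : Type*} (𝒥 : Set (Set X)) (A : Set X) : ℝ :=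
  sInf ((fun J => ((A ∩ J).ncard : ℝ) / (J.ncard : ℝ)) '' 𝒥)

/-- The product set `BA = {ba : b ∈ B ∪ {e}, a ∈ A ∪ {e}}`. -/
def prodset {G : Type*} [Group G] (B A : Set G) : Set G :=
  {g | ∃ b ∈ B ∪ {1}, ∃ a ∈ A ∪ {1}, b * a = g}

/-!
With `α = σ(A)`, the heart of the argument is the bound
`|BA ∩ J| ≥ |B ∩ J| + α |J \ B|` for every finite downward closed `J`, by induction on `|J|`.
Take `b` maximal in `B ∩ J`. Above `b`, the set `J` meets `B` only in `b`, and
`C = b⁻¹ (J ∩ (b, ∞))` is again finite and downward closed (left invariance), so `b` together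
with `b (A ∩ C) ⊆ BA` supplies `1 + α |J ∩ (b, ∞)|` elements of `BA` above `b`; the rest
`J \ [b, ∞)` is downward closed and handled by induction.
Since `|J \ B| = |J| - |B ∩ J|` and `|B ∩ J| ≥ β |J|`, this gives `|BA ∩ J| ≥ (α + β - αβ) |J|`.
-/

section Density

variable {X : Type*} (𝒥 : Set (Set X)) (A : Set X)

lemma densJ_le_div {C : Set X} (hC : C ∈ 𝒥) :
    densJ 𝒥 A ≤ ((A ∩ C).ncard : ℝ) / C.ncard :=
  csInf_le ⟨0, by rintro _ ⟨J, -, rfl⟩; positivity⟩ ⟨C, hC, rfl⟩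

lemma densJ_mul_ncard_le {C : Set X} (hC : C ∈ 𝒥) :
    densJ 𝒥 A * C.ncard ≤ (A ∩ C).ncard := by
  rcases (Nat.cast_nonneg (α := ℝ) C.ncard).eq_or_lt with h | h
  · rw [← h, mul_zero]
    positivity
  · exact (le_div_iff₀ h).1 (densJ_le_div 𝒥 A hC)

lemma densJ_le_one {C : Set X} (hC : C ∈ 𝒥) (hCf : C.Finite) : densJ 𝒥 A ≤ 1 :=
  (densJ_le_div 𝒥 A hC).trans <|
    div_le_one_of_le₀ (mod_cast Set.ncard_le_ncard Set.inter_subset_right hCf) (by positivity)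

lemma le_densJ {c : ℝ} (hne : 𝒥.Nonempty) (hpos : ∀ C ∈ 𝒥, 0 < C.ncard)
    (h : ∀ C ∈ 𝒥, c * C.ncard ≤ (A ∩ C).ncard) : c ≤ densJ 𝒥 A :=
  le_csInf (hne.image _) <| by
    rintro _ ⟨C, hC, rfl⟩
    exact (le_div_iff₀ (mod_cast hpos C hC)).2 (h C hC)

end Density

lemma densJ_goodJ_mul_ncard_le {G : Type*} [Group G] [PartialOrder G] (A : Set G) {C : Set G}
    (hC : DownwardClosed C) (hCf : C.Finite) :
    densJ (goodJ G) A * C.ncard ≤ (A ∩ C).ncard := by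
  obtain rfl | hne := C.eq_empty_or_nonempty
  · simp
  · exact densJ_mul_ncard_le _ A ⟨hne, hCf, hC⟩

section LeftOrdered

variable {G : Type*} [Group G] [PartialOrder G]

lemma DownwardClosed.sdiff_Ici {J : Set G} (hJ : DownwardClosed J) (b : G) :
    DownwardClosed (J \ Set.Ici b) :=
  ⟨Set.sdiff_subset.trans hJ.1, fun x hx _ hy =>
    ⟨hJ.2 x hx.1 hy, fun hby => hx.2 (le_trans hby hy.2.le)⟩⟩

lemma DownwardClosed.eq_empty_of_inter_eq_empty {J B : Set G} (hJ : DownwardClosed J)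
    (hJf : J.Finite) (hB : B ⊆ Set.Ioi 1)
    (hBx : ∀ J ∈ goodJ G, ∀ x ∈ J \ B, (B ∩ Set.Iio x).Nonempty) (hBJ : B ∩ J = ∅) :
    J = ∅ := by
  refine Set.eq_empty_of_forall_notMem fun x hx => ?_
  have hxB : x ∉ B := fun h => hBJ.subset ⟨h, hx⟩
  obtain ⟨b, hb, hbx⟩ := hBx J ⟨⟨x, hx⟩, hJf, hJ⟩ x ⟨hx, hxB⟩
  exact hBJ.subset ⟨hb, hJ.2 x hx ⟨hB hb, hbx⟩⟩

variable [MulLeftMono G]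

lemma DownwardClosed.preimage_mul_left {J : Set G} (hJ : DownwardClosed J) {b : G}
    (hb : 1 ≤ b) : DownwardClosed ((b * ·) ⁻¹' (J ∩ Set.Ioi b)) := by
  refine ⟨fun y hy => ?_, fun y hy w hw => ?_⟩
  · simpa using (mul_lt_mul_iff_left b).1 (by simpa using hy.2)
  · have hbw : b < b * w := by simpa using (mul_lt_mul_iff_left b).2 hw.1
    exact ⟨hJ.2 _ hy.1 ⟨hb.trans_lt hbw, (mul_lt_mul_iff_left b).2 hw.2⟩, hbw⟩

lemma ncard_inter_prodset_Ici_ge_of_maximal {A B J : Set G} {α : ℝ} (hJ : DownwardClosed J)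
    (hJf : J.Finite) (hα : ∀ C, DownwardClosed C → C.Finite → α * C.ncard ≤ (A ∩ C).ncard)
    {b : G} (hb : Maximal (· ∈ B ∩ J) b) :
    (B ∩ (J ∩ Set.Ici b)).ncard + α * ((J ∩ Set.Ici b) \ B).ncard
      ≤ (prodset B A ∩ (J ∩ Set.Ici b)).ncard := by
  obtain ⟨⟨hbB, hbJ⟩, hbmax⟩ := hb
  have hBU : B ∩ (J ∩ Set.Ici b) = {b} := by
    ext z
    refine ⟨fun ⟨hzB, hzJ, hbz⟩ => le_antisymm (hbmax ⟨hzB, hzJ⟩ hbz) hbz, ?_⟩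
    rintro rfl
    exact ⟨hbB, hbJ, le_rfl⟩
  have hUB : (J ∩ Set.Ici b) \ B = J ∩ Set.Ioi b := by
    ext z
    refine ⟨fun ⟨⟨hzJ, hbz⟩, hzB⟩ => ⟨hzJ, hbz.lt_of_ne fun h => hzB (h ▸ hbB)⟩, ?_⟩
    rintro ⟨hzJ, hbz⟩
    exact ⟨⟨hzJ, hbz.le⟩, fun hzB => hbz.not_ge (hbmax ⟨hzB, hzJ⟩ hbz.le)⟩
  set C := (b * ·) ⁻¹' (J ∩ Set.Ioi b)
  have hC : DownwardClosed C := hJ.preimage_mul_left (hJ.1 hbJ).le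
  have hCf : C.Finite := (hJf.subset Set.inter_subset_left).preimage (mul_right_injective b).injOn
  have hCcard : C.ncard = (J ∩ Set.Ioi b).ncard :=
    Set.ncard_preimage_of_injective_subset_range (mul_right_injective b)
      fun z _ => ⟨b⁻¹ * z, mul_inv_cancel_left b z⟩
  have hsub : insert b ((b * ·) '' (A ∩ C)) ⊆ prodset B A ∩ (J ∩ Set.Ici b) := by
    refine Set.insert_subset_iff.2 ⟨⟨⟨b, Or.inl hbB, 1, Or.inr rfl, mul_one b⟩, hbJ, le_rfl⟩, ?_⟩
    rintro _ ⟨y, ⟨hyA, hyJ, hby⟩, rfl⟩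
    exact ⟨⟨b, Or.inl hbB, y, Or.inl hyA, rfl⟩, hyJ, hby.le⟩
  have hbnot : b ∉ (b * ·) '' (A ∩ C) := fun ⟨y, ⟨_, _, hby⟩, hy⟩ => hby.ne' hy
  have hcard : (A ∩ C).ncard + 1 ≤ (prodset B A ∩ (J ∩ Set.Ici b)).ncard := by
    have := Set.ncard_le_ncard hsub ((hJf.subset Set.inter_subset_left).inter_of_right _)
    rwa [Set.ncard_insert_of_notMem hbnot ((hCf.inter_of_right A).image _),
      Set.ncard_image_of_injective _ (mul_right_injective b)] at this
  rw [hBU, hUB, Set.ncard_singleton, ← hCcard]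
  have hαC := hα C hC hCf
  have hcardR : ((A ∩ C).ncard : ℝ) + 1 ≤ (prodset B A ∩ (J ∩ Set.Ici b)).ncard := mod_cast hcard
  push_cast
  linarith

lemma ncard_inter_prodset_ge {A B : Set G} (hB : B ⊆ Set.Ioi 1) {α : ℝ}
    (hα : ∀ C, DownwardClosed C → C.Finite → α * C.ncard ≤ (A ∩ C).ncard)
    (hBx : ∀ J ∈ goodJ G, ∀ x ∈ J \ B, (B ∩ Set.Iio x).Nonempty)
    {J : Set G} (hJ : DownwardClosed J) (hJf : J.Finite) :
    (B ∩ J).ncard + α * (J \ B).ncard ≤ (prodset B A ∩ J).ncard := by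
  induction hn : J.ncard using Nat.strong_induction_on generalizing J with
  | _ n ih =>
  obtain hBJ | hBJ := (B ∩ J).eq_empty_or_nonempty
  · simp [hJ.eq_empty_of_inter_eq_empty hJf hB hBx hBJ]
  obtain ⟨b, hb⟩ := (hJf.inter_of_right B).exists_maximal hBJ
  have hlt : (J \ Set.Ici b).ncard < n := hn ▸ Set.ncard_lt_ncard
    ((Set.ssubset_iff_of_subset Set.sdiff_subset).2 ⟨b, hb.1.2, fun h => h.2 le_rfl⟩) hJf
  have hL := ih _ hlt (hJ.sdiff_Ici b) hJf.sdiff rfl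
  have hU := ncard_inter_prodset_Ici_ge_of_maximal hJ hJf hα hb
  have split (S : Set G) :
      (S ∩ (J ∩ Set.Ici b)).ncard + (S ∩ (J \ Set.Ici b)).ncard = (S ∩ J).ncard := by
    rw [← Set.inter_assoc, ← Set.inter_sdiff_assoc,
      Set.ncard_inter_add_ncard_sdiff_eq_ncard _ _ (hJf.inter_of_right S)]
  have splitc :
      ((J ∩ Set.Ici b) \ B).ncard + ((J \ Set.Ici b) \ B).ncard = (J \ B).ncard := by
    rw [← Set.sdiff_inter_right_comm, Set.sdiff_sdiff_comm,
      Set.ncard_inter_add_ncard_sdiff_eq_ncard _ _ hJf.sdiff]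
  rw [← split B, ← split (prodset B A), ← splitc]
  push_cast
  linarith

end LeftOrdered

theorem densJ_prodset_ge_left_general
    {G : Type*} [Group G] [PartialOrder G]
    [CovariantClass G G (· * ·) (· ≤ ·)]
    (A B : Set G) (hB : B ⊆ Set.Ioi 1)
    (α β : ℝ) (hα : densJ (goodJ G) A = α) (hβ : densJ (goodJ G) B = β)
    (hBx : ∀ J ∈ goodJ G, ∀ x ∈ J \ B,
      (B ∩ Set.Iio x).Nonempty ∧ (B ∩ Set.Iio x).Finite) :
    densJ (goodJ G) (prodset B A) ≥ α + β - α * β := by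
  subst hα hβ
  obtain hempty | ⟨J₀, hJ₀⟩ := (goodJ G).eq_empty_or_nonempty
  · simp [densJ, hempty]
  have hα1 : densJ (goodJ G) A ≤ 1 := densJ_le_one _ A hJ₀ hJ₀.2.1
  refine le_densJ _ _ ⟨J₀, hJ₀⟩ (fun J hJ => (Set.ncard_pos hJ.2.1).2 hJ.1) fun J hJ => ?_
  have hkey := ncard_inter_prodset_ge hB (fun C => densJ_goodJ_mul_ncard_le A)
    (fun J hJ x hx => (hBx J hJ x hx).1) hJ.2.2 hJ.2.1
  have hβJ := densJ_mul_ncard_le _ B hJ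
  have hsplit : ((B ∩ J).ncard : ℝ) + (J \ B).ncard = J.ncard := by
    rw [Set.inter_comm]
    exact mod_cast Set.ncard_inter_add_ncard_sdiff_eq_ncard J B hJ.2.1
  linear_combination
    hkey + mul_le_mul_of_nonneg_left hβJ (sub_nonneg.2 hα1) - densJ (goodJ G) A * hsplit

/-- Shnirel'man's inequality in a left partially ordered group:
`σ_𝒥(BA) ≥ α + β - αβ`. -/
theorem densJ_prodset_ge_left
    {G : Type*} [Group G] [PartialOrder G]
    [CovariantClass G G (· * ·) (· ≤ ·)]
    (A B : Set G) (hA : A ⊆ Set.Ioi 1) (hB : B ⊆ Set.Ioi 1)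
    (α β : ℝ) (hα : densJ (goodJ G) A = α) (hβ : densJ (goodJ G) B = β)
    (hBx : ∀ J ∈ goodJ G, ∀ x ∈ J \ B,
      (B ∩ Set.Iio x).Nonempty ∧ (B ∩ Set.Iio x).Finite) :
    densJ (goodJ G) (prodset B A) ≥ α + β - α * β :=
  densJ_prodset_ge_left_general A B hB α β hα hβ hBx
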